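/- arXiv:2106.12465 — 9 statements merged into one kernel-verified Lean document; each statement's English description precedes it below -/
import Mathlib

section
/- Let t ≥ 2 be an integer and let a, b, c, d be positive integers with a ≤ b and c ≤ d. If (t^a - 1)(t^b - 1) = (t^c - 1)(t^d - 1), then a = c and b = d. -/
/-!
For `x, y ≥ 2`, if `2 * z * w ≤ x * y` then `(z - 1) * (w - 1) < (x - 1) * (y - 1)`. As distinct powers of `t` differ by a factor of at
least `2`, the hypothesis forces `a + b = c + d`, i.e. `t ^ a * t ^ b = t ^ c * t ^ d`. Expanding
the hypothesis then also gives `t ^ a + t ^ b = t ^ c + t ^ d`, so both pairs are the roots of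
the same quadratic.
-/

theorem Nat.sub_one_mul_sub_one_lt_of_two_mul_le {x y z w : ℕ} (hx : 2 ≤ x) (hy : 2 ≤ y)
    (h : 2 * (z * w) ≤ x * y) : (z - 1) * (w - 1) < (x - 1) * (y - 1) := by
  have hpos : 0 < (x - 1) * (y - 1) := Nat.mul_pos (by omega) (by omega)
  rcases Nat.lt_or_ge z 2 with hz | hz
  · rwa [Nat.sub_eq_zero_of_le (by omega), zero_mul]
  rcases Nat.lt_or_ge w 2 with hw | hw
  · rwa [Nat.sub_eq_zero_of_le (by omega : w ≤ 1), mul_zero]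
  zify [Nat.one_le_of_lt hx, Nat.one_le_of_lt hy, Nat.one_le_of_lt hz, Nat.one_le_of_lt hw]
    at h ⊢
  nlinarith

theorem Nat.pow_sub_one_mul_pow_sub_one_lt {t a b c d : ℕ} (ht : 2 ≤ t) (ha : 0 < a) (hb : 0 < b)
    (h : c + d < a + b) : (t ^ c - 1) * (t ^ d - 1) < (t ^ a - 1) * (t ^ b - 1) := by
  refine Nat.sub_one_mul_sub_one_lt_of_two_mul_le ?_ ?_ ?_
  · exact ht.trans (Nat.le_self_pow ha.ne' t)
  · exact ht.trans (Nat.le_self_pow hb.ne' t)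
  calc 2 * (t ^ c * t ^ d) ≤ t * t ^ (c + d) := by rw [pow_add]; gcongr
    _ = t ^ (c + d + 1) := by ring
    _ ≤ t ^ a * t ^ b := by rw [← pow_add]; exact Nat.pow_le_pow_right (by omega) h

theorem Nat.add_eq_add_of_sub_one_mul_sub_one_eq {x y z w : ℕ} (hx : 1 ≤ x) (hy : 1 ≤ y)
    (hz : 1 ≤ z) (hw : 1 ≤ w) (hp : x * y = z * w) (h : (x - 1) * (y - 1) = (z - 1) * (w - 1)) :
    x + y = z + w := by
  zify [hx, hy, hz, hw] at h hp ⊢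
  linear_combination hp - h

theorem Nat.eq_and_eq_of_add_eq_of_mul_eq {x y z w : ℕ} (hxy : x ≤ y) (hzw : z ≤ w)
    (hs : x + y = z + w) (hp : x * y = z * w) : x = z ∧ y = w := by
  have hroot : ((x : ℤ) - z) * ((x : ℤ) - w) = 0 := by
    zify at hs hp
    linear_combination (x : ℤ) * hs - hp
  rcases Int.mul_eq_zero.mp hroot with h | h <;> omega

theorem stmt_0 (t a b c d : ℕ) (ht : 2 ≤ t) (ha : 0 < a) (hb : 0 < b)
    (hc : 0 < c) (hd : 0 < d) (hab : a ≤ b) (hcd : c ≤ d)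
    (h : (t ^ a - 1) * (t ^ b - 1) = (t ^ c - 1) * (t ^ d - 1)) :
    a = c ∧ b = d := by
  have hsum : a + b = c + d := by
    by_contra hne
    rcases Nat.lt_or_gt_of_ne hne with hlt | hlt
    · exact (Nat.pow_sub_one_mul_pow_sub_one_lt ht hc hd hlt).ne h
    · exact (Nat.pow_sub_one_mul_pow_sub_one_lt ht ha hb hlt).ne' h
  have hprod : t ^ a * t ^ b = t ^ c * t ^ d := by rw [← pow_add, ← pow_add, hsum]
  have hone : ∀ n, 1 ≤ t ^ n := fun n => Nat.one_le_pow n t (by omega)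
  have hmono : ∀ {m n}, m ≤ n → t ^ m ≤ t ^ n := Nat.pow_le_pow_right (by omega)
  obtain ⟨hac, hbd⟩ := Nat.eq_and_eq_of_add_eq_of_mul_eq (hmono hab) (hmono hcd)
    (Nat.add_eq_add_of_sub_one_mul_sub_one_eq (hone a) (hone b) (hone c) (hone d) hprod h) hprod
  exact ⟨Nat.pow_right_injective ht hac, Nat.pow_right_injective ht hbd⟩
end

section
/- Let C be a rank-nondegenerate [n,k]_{q^m/q} code with generator matrix G, and let 𝒰 ⊆ F_{q^m}^k be the F_q-span of the columns of G. Then for every nonzero v ∈ F_{q^m}^k, rk(vG) = n - dim_{F_q}(𝒰 ∩ ⟨v⟩^⊥), where ⟨v⟩^⊥ = {u ∈ F_{q^m}^k : u·v^T = 0}. -/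
open Module Submodule

/-- The rank support of a vector `v ∈ L^n` over the subfield `K`: the `K`-span of the
rows of the expansion matrix, i.e. the space of all `(φ (v 1), ..., φ (v n))` for
`K`-linear functionals `φ : L → K`. -/
noncomputable def rkSupport (K : Type) {L : Type} [Field K] [Field L] [Algebra K L]
    {n : ℕ} (v : Fin n → L) : Submodule K (Fin n → K) :=
  LinearMap.range (LinearMap.pi (fun i => LinearMap.applyₗ (v i) :
    Fin n → Module.Dual K L →ₗ[K] K))


/-- The linear functional `u ↦ ∑ i, u i * v i` on `L^k`. -/
def dotLin {L : Type} [Field L] {k : ℕ} (v : Fin k → L) : (Fin k → L) →ₗ[L] L where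
  toFun u := ∑ i, u i * v i
  map_add' u w := by simp [add_mul, Finset.sum_add_distrib]
  map_smul' a u := by simp [Finset.mul_sum, mul_assoc]

/-! The entry `φ (w i)` of a vector of `rkSupport K w` is the `i`-th coordinate of the pulled-back
functional `φ ∘ (c ↦ ∑ cᵢ wᵢ)`, so `rkSupport K w` is, up to coordinates, the range of a dual map and
has the dimension of the `K`-span of the entries of `w`. The entries of `v G` are the images
`v · gⱼ` of the columns of `G` under the `K`-linear map `u ↦ u · v`, so that span is the image of
`𝒰` under it, and rank–nullity on `𝒰` gives `n - dim (𝒰 ∩ ⟨v⟩^⊥)`. -/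

theorem rkSupport_eq_range {K L : Type} [Field K] [Field L] [Algebra K L] {n : ℕ}
    (w : Fin n → L) :
    rkSupport K w = LinearMap.range ((Pi.basisFun K (Fin n)).dualBasis.equivFun.toLinearMap ∘ₗ
      (Fintype.linearCombination K w).dualMap) := by
  rw [rkSupport]
  congr 1
  ext φ i
  simp [Basis.dualBasis_equivFun, Fintype.linearCombination_apply_single]

theorem finrank_rkSupport {K L : Type} [Field K] [Field L] [Algebra K L] {n : ℕ}
    (w : Fin n → L) :
    finrank K (rkSupport K w) = finrank K (span K (Set.range w)) := by
  rw [rkSupport_eq_range, LinearMap.range_comp, LinearEquiv.finrank_map_eq,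
    LinearMap.finrank_range_dualMap_eq_finrank_range, Fintype.range_linearCombination]

theorem Submodule.finrank_map_add_finrank_ker_inf {K V W : Type*} [DivisionRing K]
    [AddCommGroup V] [Module K V] [AddCommGroup W] [Module K W]
    (f : V →ₗ[K] W) (U : Submodule K V) [FiniteDimensional K U] :
    finrank K (U.map f) + finrank K ↥(LinearMap.ker f ⊓ U) = finrank K U := by
  rw [← LinearMap.range_domRestrict, inf_comm, ← map_comap_subtype, finrank_map_subtype_eq,
    ← LinearMap.ker_domRestrict, LinearMap.finrank_range_add_finrank_ker]

theorem span_range_vecMul_eq_map_dotLin {K L : Type} [Field K] [Field L] [Algebra K L] {n k : ℕ}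
    (v : Fin k → L) (G : Matrix (Fin k) (Fin n) L) :
    span K (Set.range (Matrix.vecMul v G)) =
      (span K (Set.range G.transpose)).map ((dotLin v).restrictScalars K) := by
  rw [map_span, ← Set.range_comp _ G.transpose]
  congr 2
  funext j
  show ∑ i, v i * G i j = ∑ i, G i j * v i
  simp only [mul_comm]

theorem stmt_5_general {K L : Type} [Field K] [Field L] [Algebra K L] {n k : ℕ}
    (G : Matrix (Fin k) (Fin n) L)
    (U : Submodule K (Fin k → L))
    (hU : U = Submodule.span K (Set.range G.transpose))
    (hnd : Module.finrank K U = n)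
    (v : Fin k → L) :
    Module.finrank K (rkSupport K (Matrix.vecMul v G)) =
      n - Module.finrank K ↥((LinearMap.ker (dotLin v)).restrictScalars K ⊓ U) := by
  have : FiniteDimensional K U := hU ▸ FiniteDimensional.span_of_finite K (Set.finite_range _)
  rw [finrank_rkSupport, span_range_vecMul_eq_map_dotLin, ← hU, ← hnd,
    ← finrank_map_add_finrank_ker_inf ((dotLin v).restrictScalars K)]
  exact (Nat.add_sub_cancel _ _).symm

theorem stmt_5 {K L : Type} [Field K] [Field L] [Algebra K L] {n k : ℕ}
    (C : Submodule L (Fin n → L)) (G : Matrix (Fin k) (Fin n) L)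
    (hG : C = Submodule.span L (Set.range G))
    (hk : Module.finrank L C = k)
    (U : Submodule K (Fin k → L))
    (hU : U = Submodule.span K (Set.range G.transpose))
    (hnd : Module.finrank K U = n)
    (v : Fin k → L) (hv : v ≠ 0) :
    Module.finrank K (rkSupport K (Matrix.vecMul v G)) =
      n - Module.finrank K ↥((LinearMap.ker (dotLin v)).restrictScalars K ⊓ U) :=
  stmt_5_general G U hU hnd v
end

section
/- Let k ≥ 2 and let C be a [km, k]_{q^m/q} rank-metric code. Then C is rank-nondegenerate if and only if C is a one-weight code, in which case every nonzero codeword has rank exactly m. -/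
open Module Submodule

section helpers

variable {K L : Type} [Field K] [Field L] [Algebra K L]

lemma double_count {α β : Type} [Fintype α] [Fintype β] (p : α → β → Prop)
    [∀ a b, Decidable (p a b)] :
    ∑ a : α, Fintype.card {b // p a b} = ∑ b : β, Fintype.card {a // p a b} := by
  simp only [Fintype.card_subtype, Finset.card_filter]
  exact Finset.sum_comm

lemma rk_eq [FiniteDimensional K L] {n : ℕ} (v : Fin n → L) :
    finrank K (rkSupport K v) = finrank K (span K (Set.range v)) := by
  classical
  have hker : LinearMap.ker (LinearMap.pi (fun i => LinearMap.applyₗ (v i) :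
      Fin n → Module.Dual K L →ₗ[K] K)) = (span K (Set.range v)).dualAnnihilator := by
    ext φ
    rw [LinearMap.mem_ker, Submodule.mem_dualAnnihilator]
    constructor
    · intro h x hx
      have hle : span K (Set.range v) ≤ LinearMap.ker φ := by
        rw [span_le]
        rintro _ ⟨i, rfl⟩
        have := congrFun h i
        simpa [LinearMap.pi_apply] using this
      exact hle hx
    · intro h
      funext i
      simpa [LinearMap.pi_apply] using h (v i) (subset_span ⟨i, rfl⟩)
  calc finrank K (rkSupport K v)
      = finrank K (Module.Dual K L ⧸ LinearMap.ker (LinearMap.pi (fun i => LinearMap.applyₗ (v i) :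
          Fin n → Module.Dual K L →ₗ[K] K))) :=
        (LinearEquiv.finrank_eq (LinearMap.quotKerEquivRange _)).symm
    _ = finrank K (Module.Dual K L ⧸
          ((span K (Set.range v)).dualAnnihilator : Submodule K (Module.Dual K L))) := by rw [hker]
    _ = finrank K (Module.Dual K (span K (Set.range v))) :=
        LinearEquiv.finrank_eq (Subspace.quotAnnihilatorEquiv _)
    _ = finrank K (span K (Set.range v)) := Subspace.dual_finrank_eq

lemma top_iff_orth {n : ℕ} (W : Submodule K (Fin n → K)) :
    W = ⊤ ↔ ∀ lam : Fin n → K, (∀ u ∈ W, ∑ i, lam i * u i = 0) → lam = 0 := by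
  classical
  constructor
  · intro hW lam h
    funext i
    have hmem : (Pi.single i 1 : Fin n → K) ∈ W := by rw [hW]; trivial
    have := h (Pi.single i 1) hmem
    simpa [Pi.single_apply, Finset.sum_ite_eq'] using this
  · intro h
    by_contra hW
    have hlt : W < ⊤ := lt_top_iff_ne_top.mpr hW
    obtain ⟨φ, hφ0, hφW⟩ := Submodule.exists_dual_map_eq_bot_of_lt_top hlt inferInstance
    have hφmem : ∀ u ∈ W, φ u = 0 := by
      intro u hu
      have : φ u ∈ W.map φ := Submodule.mem_map_of_mem hu
      rw [hφW] at this
      exact (Submodule.mem_bot K).mp this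
    have key : ∀ u : Fin n → K, φ u = ∑ i, u i * φ (Pi.single i 1) := by
      intro u
      have hu : u = ∑ i, u i • (Pi.single i 1 : Fin n → K) := by
        funext j
        simp [Finset.sum_apply, Pi.single_apply]
      conv_lhs => rw [hu]
      rw [map_sum]
      simp [smul_eq_mul]
    have hlam : (fun i => φ (Pi.single i 1)) = 0 := by
      apply h
      intro u hu
      have := hφmem u hu
      rw [← this, key u]
      exact Finset.sum_congr rfl fun i _ => mul_comm _ _
    apply hφ0
    apply LinearMap.ext
    intro u
    rw [key u]
    have hz : ∀ i, φ (Pi.single i 1) = 0 := fun i => congrFun hlam i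
    simp [hz]

end helpers

/-- Numeric core: the one-weight counting equation forces full support. -/
lemma numeric_core {q m d w t : ℕ} (hq : 2 ≤ q) (hm : 1 ≤ m) (hd : 1 ≤ d)
    (hw1 : 1 ≤ w) (hwm : w ≤ m)
    (heq : q ^ (w + t) + (q ^ ((d + 1) * m) - 1) * q ^ t
        = q ^ ((d + 1) * m) + (q ^ (w + t) - 1) * q ^ (d * m)) :
    w + t = (d + 1) * m := by
  have hq0 : 0 < q := by omega
  -- abbreviations
  have hA : q ^ ((d + 1) * m) = q ^ (d * m) * q ^ m := by
    rw [← pow_add]; ring_nf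
  have hE : q ^ (w + d * m) = q ^ w * q ^ (d * m) := pow_add q w (d * m)
  have hP : q ^ (w + t) = q ^ w * q ^ t := pow_add q w t
  set B := q ^ (d * m) with hBdef
  set M := q ^ m with hMdef
  set P := q ^ w with hPdef
  set T := q ^ t with hTdef
  -- positivity
  have hB1 : 1 ≤ B := Nat.one_le_pow _ _ hq0
  have hM1 : 1 ≤ M := Nat.one_le_pow _ _ hq0
  have hP1 : 1 ≤ P := Nat.one_le_pow _ _ hq0
  have hT1 : 1 ≤ T := Nat.one_le_pow _ _ hq0
  have hPM : P ≤ M := Nat.pow_le_pow_right hq0 hwm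
  -- rewrite the equation without subtraction
  rw [hP, hA] at heq
  rw [Nat.sub_mul, Nat.sub_mul, one_mul] at heq
  have h1 : T ≤ B * M * T := Nat.le_mul_of_pos_left T (by positivity)
  have h2 : B ≤ P * T * B := Nat.le_mul_of_pos_left B (by positivity)
  have heq' : P * T + B * M * T + B = B * M + P * T * B + T := by omega
  -- introduce D
  have hEA : P * B ≤ B * M := by
    calc P * B ≤ M * B := Nat.mul_le_mul_right B hPM
    _ = B * M := Nat.mul_comm M B
  obtain ⟨D, hD⟩ : ∃ D, D + (1 + P * B) = B * M + P := ⟨B * M + P - (1 + P * B), by omega⟩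
  -- key identity : T * D + B = B * M
  have h3 : T * D + T * (1 + P * B) = T * (B * M + P) := by rw [← Nat.mul_add, hD]
  have key : T * D + B = B * M := by ring_nf at h3 heq' ⊢; omega
  -- coprimality of q with M - 1 and with D
  have hqM : q ∣ M := hMdef ▸ dvd_pow_self q (by omega)
  have hqB : q ∣ B := hBdef ▸ dvd_pow_self q (by positivity)
  have hqP : q ∣ P := hPdef ▸ dvd_pow_self q (by omega)
  have copM : Nat.Coprime q (M - 1) := by
    have h := Nat.dvd_sub (Nat.gcd_dvd_left q (M - 1) |>.trans hqM) (Nat.gcd_dvd_right q (M - 1))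
    have : M - (M - 1) = 1 := by omega
    rw [this] at h
    exact Nat.dvd_one.mp h
  have copD : Nat.Coprime q D := by
    have hq1 : q ∣ D + 1 := by
      have e1 : D + 1 = (B * M - P * B) + P := by omega
      rw [e1]
      exact Nat.dvd_add (Nat.dvd_sub (hqB.mul_right M) (hqP.mul_right B)) hqP
    have h := Nat.dvd_sub (Nat.gcd_dvd_left q D |>.trans hq1) (Nat.gcd_dvd_right q D)
    have : D + 1 - D = 1 := by omega
    rw [this] at h
    exact Nat.dvd_one.mp h
  -- the identity T * D = B * (M - 1)
  have hTD : T * D = B * (M - 1) := by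
    rw [Nat.mul_sub, Nat.mul_one]; omega
  -- T ∣ B
  have hT_dvd_B : T ∣ B := by
    have : T ∣ B * (M - 1) := hTD ▸ Dvd.intro D rfl
    exact (Nat.Coprime.pow_left t copM).dvd_of_dvd_mul_right this
  -- B ∣ T
  have hB_dvd_T : B ∣ T := by
    have : B ∣ T * D := hTD ▸ Dvd.intro (M - 1) rfl
    exact (Nat.Coprime.pow_left (d * m) copD).dvd_of_dvd_mul_right this
  have hTB : T = B := Nat.dvd_antisymm hT_dvd_B hB_dvd_T
  have ht : t = d * m := by
    have := (Nat.pow_dvd_pow_iff_le_right (by omega : 1 < q)).mp (hTdef ▸ hBdef ▸ hT_dvd_B)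
    have := (Nat.pow_dvd_pow_iff_le_right (by omega : 1 < q)).mp (hTdef ▸ hBdef ▸ hB_dvd_T)
    omega
  -- cancel B in key : D + 1 = M
  have hDM : D + 1 = M := by
    have hbk : B * (D + 1) = B * M := by rw [hTB] at key; ring_nf at key ⊢; omega
    exact Nat.eq_of_mul_eq_mul_left (by omega) hbk
  -- now M + P * B = B * M + P
  have hfin : M + P * B = B * M + P := by omega
  -- conclude w = m
  have hwm' : w = m := by
    by_contra hne
    have hwlt : w < m := by omega
    have d1 : q ^ (w + 1) ∣ M := hMdef ▸ pow_dvd_pow q (by omega)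
    have d2 : q ^ (w + 1) ∣ P * B := by
      rw [hPdef, hBdef, ← pow_add]
      exact pow_dvd_pow q (by
        have : 1 ≤ d * m := Nat.one_le_iff_ne_zero.mpr (by positivity)
        omega)
    have d3 : q ^ (w + 1) ∣ B * M := by
      rw [hBdef, hMdef, ← pow_add]
      exact pow_dvd_pow q (by omega)
    have d4 : q ^ (w + 1) ∣ P := by
      have e : (M + P * B) - B * M = P := by omega
      exact e ▸ Nat.dvd_sub (Nat.dvd_add d1 d2) d3
    have := (Nat.pow_dvd_pow_iff_le_right (by omega : 1 < q)).mp (hPdef ▸ d4)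
    omega
  rw [hwm', ht]; ring

section core

variable {K L : Type} [Field K] [Field L] [Algebra K L] {k n : ℕ}

/-- The `L`-linear dot product with `x`. -/
noncomputable def dotL (x : Fin k → L) : (Fin k → L) →ₗ[L] L := ∑ j, x j • LinearMap.proj j

lemma dotL_apply (x y : Fin k → L) : dotL x y = ∑ j, x j * y j := by
  simp [dotL]

lemma dotL_comm (x y : Fin k → L) : dotL x y = dotL y x := by
  rw [dotL_apply, dotL_apply]
  exact Finset.sum_congr rfl fun j _ => mul_comm _ _

/-- The dot product with `x` as a `K`-linear map. -/
noncomputable def ellK (K : Type) [Field K] {L : Type} [Field L] [Algebra K L] {k : ℕ}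
    (x : Fin k → L) : (Fin k → L) →ₗ[K] L := (dotL x).restrictScalars K

lemma ellK_apply (x y : Fin k → L) : ellK K x y = ∑ j, x j * y j := dotL_apply x y

lemma range_dotL_eq_top (x : Fin k → L) (hx : x ≠ 0) : LinearMap.range (dotL x) = ⊤ := by
  rw [LinearMap.range_eq_top]
  intro a
  obtain ⟨j, hj⟩ := Function.ne_iff.mp hx
  refine ⟨Pi.single j ((x j)⁻¹ * a), ?_⟩
  rw [dotL_apply]
  rw [Finset.sum_eq_single j]
  · rw [Pi.single_eq_same]
    have hj' : x j ≠ 0 := fun h => hj (by simp [h])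
    field_simp
  · intro b _ hb
    rw [Pi.single_eq_of_ne hb]
    ring
  · simp

lemma range_ellK_eq_top (x : Fin k → L) (hx : x ≠ 0) : LinearMap.range (ellK K x) = ⊤ := by
  have h := range_dotL_eq_top x hx
  rw [LinearMap.range_eq_top] at h ⊢
  exact h

/-- The codeword attached to coefficients `x`, given rows `e`. -/
noncomputable def cwv (e : Fin k → Fin n → L) (x : Fin k → L) : Fin n → L :=
  fun i => ∑ j, x j * e j i

/-- The columns of the generator matrix. -/
def gcol (e : Fin k → Fin n → L) : Fin n → Fin k → L := fun i j => e j i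

lemma cwv_eq_sum (e : Fin k → Fin n → L) (x : Fin k → L) :
    cwv e x = ∑ j, x j • e j := by
  funext i
  simp [cwv, Finset.sum_apply, smul_eq_mul]

lemma cwv_apply_eq_ellK (e : Fin k → Fin n → L) (x : Fin k → L) (i : Fin n) :
    cwv e x i = ellK K x (gcol e i) := by
  rw [ellK_apply]
  rfl

lemma span_range_cwv (e : Fin k → Fin n → L) (x : Fin k → L) :
    span K (Set.range (cwv e x)) = (span K (Set.range (gcol e))).map (ellK K x) := by
  rw [Submodule.map_span, ← Set.range_comp]
  have h : (⇑(ellK K x) ∘ gcol e) = cwv e x :=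
    funext fun i => (cwv_apply_eq_ellK (K := K) e x i).symm
  rw [h]

lemma cwv_zero_iff (e : Fin k → Fin n → L) (hli : LinearIndependent L e) (x : Fin k → L)
    (hx : cwv e x = 0) : x = 0 := by
  have h := cwv_eq_sum e x
  rw [hx] at h
  have := Fintype.linearIndependent_iff.mp hli x h.symm
  funext j
  exact this j

end core

section core2

variable {K L : Type} [Field K] [Field L] [Algebra K L] {k n : ℕ}

lemma coreA [FiniteDimensional K L] (e : Fin k → Fin n → L) (x : Fin k → L) (hx : x ≠ 0)
    (hV : span K (Set.range (gcol e)) = ⊤) :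
    finrank K (span K (Set.range (cwv e x))) = finrank K L := by
  rw [span_range_cwv, hV, Submodule.map_top, range_ellK_eq_top x hx, finrank_top]

lemma coreC [FiniteDimensional K L] (C : Submodule L (Fin n → L)) (e : Fin k → Fin n → L)
    (he : ∀ j, e j ∈ C) (hsur : ∀ c ∈ C, ∃ x, c = cwv e x)
    (hdim : finrank K (Fin k → L) = n)
    (horth : ∀ (W : Submodule K (Fin n → K)),
      W = ⊤ ↔ ∀ lam : Fin n → K, (∀ u ∈ W, ∑ i, lam i * u i = 0) → lam = 0) :
    (⨆ v ∈ C, rkSupport K v) = ⊤ ↔ span K (Set.range (gcol e)) = ⊤ := by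
  rw [horth]
  have step1 : ∀ lam : Fin n → K,
      (∀ u ∈ (⨆ v ∈ C, rkSupport K v), ∑ i, lam i * u i = 0) ↔
      (∀ v ∈ C, (∑ i, lam i • v i) = 0) := by
    intro lam
    constructor
    · intro h v hv
      rw [← Module.forall_dual_apply_eq_zero_iff K (∑ i, lam i • v i)]
      intro φ
      have hu : (fun i => φ (v i)) ∈ rkSupport K v := ⟨φ, rfl⟩
      have hle : rkSupport K v ≤ ⨆ v ∈ C, rkSupport K v :=
        le_iSup₂ (f := fun v _ => rkSupport K v) v hv
      have h0 := h _ (hle hu)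
      rw [map_sum]
      simpa [smul_eq_mul] using h0
    · intro h u hu
      have hle : (⨆ v ∈ C, rkSupport K v) ≤
          LinearMap.ker (∑ i, lam i • (LinearMap.proj i : (Fin n → K) →ₗ[K] K)) := by
        refine iSup₂_le fun v hv => ?_
        rintro u ⟨φ, rfl⟩
        rw [LinearMap.mem_ker]
        have h1 : (∑ i, lam i • (LinearMap.proj i : (Fin n → K) →ₗ[K] K))
            ((LinearMap.pi (fun i => LinearMap.applyₗ (v i) :
              Fin n → Module.Dual K L →ₗ[K] K)) φ) = ∑ i, lam i * φ (v i) := by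
          simp [LinearMap.sum_apply, LinearMap.pi_apply, smul_eq_mul]
        rw [h1]
        have h2 : ∑ i, lam i * φ (v i) = φ (∑ i, lam i • v i) := by
          rw [map_sum]
          simp [smul_eq_mul]
        rw [h2, h v hv, map_zero]
      have hker := hle hu
      rw [LinearMap.mem_ker] at hker
      simpa [LinearMap.sum_apply, smul_eq_mul] using hker
  have step2 : ∀ lam : Fin n → K,
      (∀ v ∈ C, (∑ i, lam i • v i) = 0) ↔ (∑ i, lam i • gcol e i) = 0 := by
    intro lam
    constructor
    · intro h
      funext j
      have h1 := h (e j) (he j)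
      calc (∑ i, lam i • gcol e i) j = ∑ i, lam i • e j i := by
            simp [Finset.sum_apply, gcol]
        _ = 0 := h1
    · intro h v hv
      obtain ⟨x, rfl⟩ := hsur v hv
      have hj : ∀ j, ∑ i, lam i • e j i = 0 := by
        intro j
        have h2 := congrFun h j
        simpa [Finset.sum_apply, gcol] using h2
      calc ∑ i, lam i • cwv e x i = ∑ i, ∑ j, x j * (lam i • e j i) := by
            refine Finset.sum_congr rfl fun i _ => ?_
            show lam i • (∑ j, x j * e j i) = _
            rw [Finset.smul_sum]
            exact Finset.sum_congr rfl fun j _ => (mul_smul_comm (lam i) (x j) (e j i)).symm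
        _ = ∑ j, x j * (∑ i, lam i • e j i) := by
            rw [Finset.sum_comm]
            exact Finset.sum_congr rfl fun j _ => (Finset.mul_sum _ _ _).symm
        _ = 0 := by simp [hj]
  have step3 : span K (Set.range (gcol e)) = ⊤ ↔
      ∀ lam : Fin n → K, (∑ i, lam i • gcol e i) = 0 → lam = 0 := by
    constructor
    · intro hV lam hlam
      have hli : LinearIndependent K (gcol e) :=
        linearIndependent_of_top_le_span_of_card_eq_finrank (le_of_eq hV.symm)
          (by rw [Fintype.card_fin, hdim])
      exact funext (Fintype.linearIndependent_iff.mp hli lam hlam)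
    · intro h
      have hli : LinearIndependent K (gcol e) :=
        Fintype.linearIndependent_iff.mpr fun lam hlam i => congrFun (h lam hlam) i
      apply Submodule.eq_top_of_finrank_eq
      rw [hdim, finrank_span_eq_card hli, Fintype.card_fin]
  rw [step3]
  exact forall_congr' fun lam => imp_congr ((step1 lam).trans (step2 lam)) Iff.rfl

end core2
section coreB
variable {K L : Type} [Field K] [Field L] [Algebra K L] {k n : ℕ}

lemma coreB [Fintype K] [Fintype L] {m w : ℕ} (hm : finrank K L = m) (hk2 : 2 ≤ k)
    (e : Fin k → Fin n → L) (hli : LinearIndependent L e)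
    (hdim : finrank K (Fin k → L) = k * m)
    (hw : ∀ x : Fin k → L, x ≠ 0 → finrank K (span K (Set.range (cwv e x))) = w) :
    span K (Set.range (gcol e)) = ⊤ := by
  classical
  set V := span K (Set.range (gcol e)) with hVdef
  set s := finrank K V with hsdef
  have hq2 : 2 ≤ Fintype.card K := Fintype.one_lt_card
  have hm1 : 1 ≤ m := by
    have := Module.finrank_pos (R := K) (M := L)
    omega
  have hQ : Fintype.card L = Fintype.card K ^ m := by
    rw [card_eq_pow_finrank (K := K) (V := L), hm]
  have hwt : ∀ x : Fin k → L, x ≠ 0 → finrank K (V.map (ellK K x)) = w := by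
    intro x hx
    rw [← span_range_cwv]
    exact hw x hx
  have hk0 : 0 < k := by omega
  set x₀ : Fin k → L := Pi.single ⟨0, hk0⟩ 1 with hx₀def
  have hx₀ : x₀ ≠ 0 := by
    intro h0
    have := congrFun h0 ⟨0, hk0⟩
    rw [hx₀def] at this
    simp at this
  set ψ : (Fin k → L) → (V →ₗ[K] L) := fun x => (ellK K x).comp V.subtype with hψdef
  have hrange : ∀ x : Fin k → L, LinearMap.range (ψ x) = V.map (ellK K x) := by
    intro x
    rw [hψdef]
    simp [LinearMap.range_comp, Submodule.range_subtype]
  have hrank : ∀ x : Fin k → L, x ≠ 0 → w + finrank K (LinearMap.ker (ψ x)) = s := by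
    intro x hx
    have h1 := LinearMap.finrank_range_add_finrank_ker (ψ x)
    rw [hrange x, hwt x hx] at h1
    exact h1
  set t := finrank K (LinearMap.ker (ψ x₀)) with htdef
  have hst : s = w + t := (hrank x₀ hx₀).symm
  have htx : ∀ x : Fin k → L, x ≠ 0 → finrank K (LinearMap.ker (ψ x)) = t := by
    intro x hx
    have := hrank x hx
    omega
  have cardV : Fintype.card V = Fintype.card K ^ s := card_eq_pow_finrank (K := K) (V := V)
  have cardKer : ∀ x : Fin k → L, x ≠ 0 →
      Fintype.card (LinearMap.ker (ψ x)) = Fintype.card K ^ t := by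
    intro x hx
    rw [card_eq_pow_finrank (K := K) (V := LinearMap.ker (ψ x)), htx x hx]
  have hw1 : 1 ≤ w := by
    rw [← hwt x₀ hx₀]
    have hcw : cwv e x₀ ≠ 0 := fun h => hx₀ (cwv_zero_iff e hli x₀ h)
    obtain ⟨i, hi⟩ := Function.ne_iff.mp hcw
    have hgi : gcol e i ∈ V := subset_span ⟨i, rfl⟩
    have hmem : ellK K x₀ (gcol e i) ∈ V.map (ellK K x₀) := Submodule.mem_map_of_mem hgi
    have hne : ellK K x₀ (gcol e i) ≠ 0 := by
      rw [← cwv_apply_eq_ellK]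
      simpa using hi
    have hpos : 0 < finrank K (V.map (ellK K x₀)) :=
      Module.finrank_pos_iff_exists_ne_zero.mpr ⟨⟨_, hmem⟩, by
        intro h0
        exact hne (by simpa using congrArg Subtype.val h0)⟩
    omega
  have hwm : w ≤ m := by
    rw [← hwt x₀ hx₀, ← hm]
    exact Submodule.finrank_le _
  -- counting
  have hcount1 : ∀ x : Fin k → L, x ≠ 0 →
      Fintype.card {v : V // ellK K x ↑v = 0} = Fintype.card K ^ t := by
    intro x hx
    rw [← cardKer x hx]
    refine Fintype.card_congr (Equiv.subtypeEquivRight fun v => ?_)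
    rw [LinearMap.mem_ker, hψdef]
    exact Iff.rfl
  have hcount0 : Fintype.card {v : V // ellK K (0 : Fin k → L) ↑v = 0}
      = Fintype.card K ^ s := by
    rw [← cardV]
    exact Fintype.card_congr (Equiv.subtypeUnivEquiv fun v => by simp [ellK_apply])
  have hcountv : ∀ y : Fin k → L, y ≠ 0 →
      Fintype.card {x : Fin k → L // ellK K x y = 0} = Fintype.card L ^ (k - 1) := by
    intro y hy
    have hiff : ∀ x : Fin k → L, (ellK K x y = 0) ↔ x ∈ LinearMap.ker (dotL y) := by
      intro x
      rw [LinearMap.mem_ker]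
      rw [show ellK K x y = dotL x y from rfl, dotL_comm]
    rw [Fintype.card_congr (Equiv.subtypeEquivRight hiff)]
    have h1 := LinearMap.finrank_range_add_finrank_ker (dotL y)
    rw [range_dotL_eq_top y hy, finrank_top, finrank_self, Module.finrank_pi, Fintype.card_fin] at h1
    rw [card_eq_pow_finrank (K := L) (V := LinearMap.ker (dotL y))]
    congr 1
    omega
  have hcountv0 : Fintype.card {x : Fin k → L // ellK K x (0 : Fin k → L) = 0}
      = Fintype.card L ^ k := by
    rw [Fintype.card_congr (Equiv.subtypeUnivEquiv fun x => by simp [ellK_apply])]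
    rw [Fintype.card_fun, Fintype.card_fin]
  have hdc := double_count (fun (x : Fin k → L) (v : V) => ellK K x ↑v = 0)
  have hL : ∑ x : Fin k → L, Fintype.card {v : V // ellK K x ↑v = 0}
      = Fintype.card K ^ s + (Fintype.card L ^ k - 1) * Fintype.card K ^ t := by
    rw [← Finset.add_sum_erase Finset.univ _ (Finset.mem_univ (0 : Fin k → L)), hcount0,
      Finset.sum_congr rfl (fun x hx => hcount1 x (Finset.ne_of_mem_erase hx)),
      Finset.sum_const, smul_eq_mul, Finset.card_erase_of_mem (Finset.mem_univ _),
      Finset.card_univ, Fintype.card_fun, Fintype.card_fin]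
  have hR : ∑ v : V, Fintype.card {x : Fin k → L // ellK K x ↑v = 0}
      = Fintype.card L ^ k + (Fintype.card K ^ s - 1) * Fintype.card L ^ (k - 1) := by
    have hstep : ∀ v ∈ Finset.univ.erase (0 : V),
        Fintype.card {x : Fin k → L // ellK K x ↑v = 0} = Fintype.card L ^ (k - 1) := by
      intro v hv
      apply hcountv
      intro h0
      exact Finset.ne_of_mem_erase hv (ZeroMemClass.coe_eq_zero.mp h0)
    have hcv0' : Fintype.card {x : Fin k → L // ellK K x ((0 : V) : Fin k → L) = 0}
        = Fintype.card L ^ k := hcountv0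
    rw [← Finset.add_sum_erase Finset.univ _ (Finset.mem_univ (0 : V)), hcv0',
      Finset.sum_congr rfl hstep, Finset.sum_const, smul_eq_mul,
      Finset.card_erase_of_mem (Finset.mem_univ _), Finset.card_univ, cardV]
  have heq : Fintype.card K ^ s + (Fintype.card L ^ k - 1) * Fintype.card K ^ t
      = Fintype.card L ^ k + (Fintype.card K ^ s - 1) * Fintype.card L ^ (k - 1) := by
    rw [← hL, ← hR]
    exact hdc
  obtain ⟨d, rfl⟩ : ∃ d, k = d + 1 := ⟨k - 1, by omega⟩
  have hd1 : 1 ≤ d := by omega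
  rw [hQ, ← pow_mul, ← pow_mul, show d + 1 - 1 = d from rfl, hst,
    show m * (d + 1) = (d + 1) * m from mul_comm _ _,
    show m * d = d * m from mul_comm _ _] at heq
  have hfinal := numeric_core hq2 hm1 hd1 hw1 hwm heq
  apply Submodule.eq_top_of_finrank_eq
  rw [hdim]
  omega

end coreB


theorem stmt_8 {K L : Type} [Field K] [Field L] [Algebra K L] [Fintype K] [Fintype L]
    {k m : ℕ} (hm : Module.finrank K L = m) (hk2 : 2 ≤ k)
    (C : Submodule L (Fin (k * m) → L)) (hk : Module.finrank L C = k) :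
    ((⨆ v ∈ C, rkSupport K v) = ⊤ ↔
      ∃ w, ∀ c ∈ C, c ≠ 0 → Module.finrank K (rkSupport K c) = w) ∧
    ((⨆ v ∈ C, rkSupport K v) = ⊤ →
      ∀ c ∈ C, c ≠ 0 → Module.finrank K (rkSupport K c) = m) := by
  classical
  let b : Basis (Fin k) L C := Module.finBasisOfFinrankEq L C hk
  set e : Fin k → (Fin (k * m) → L) := fun j => (b j : Fin (k * m) → L) with hedef
  have he_mem : ∀ j, e j ∈ C := fun j => (b j).2
  have hli : LinearIndependent L e := by
    have h := b.linearIndependent.map' C.subtype (Submodule.ker_subtype C)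
    exact h
  have hsur : ∀ c ∈ C, ∃ x, c = cwv e x := by
    intro c hc
    refine ⟨fun j => b.repr ⟨c, hc⟩ j, ?_⟩
    rw [cwv_eq_sum]
    have h1 : (⟨c, hc⟩ : C) = ∑ j, b.repr ⟨c, hc⟩ j • b j := (b.sum_repr ⟨c, hc⟩).symm
    calc c = ((⟨c, hc⟩ : C) : Fin (k * m) → L) := rfl
      _ = ((∑ j, b.repr ⟨c, hc⟩ j • b j : C) : Fin (k * m) → L) := by rw [← h1]
      _ = ∑ j, b.repr ⟨c, hc⟩ j • e j := by
          rw [Submodule.coe_sum]; rfl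
  have hdim : finrank K (Fin k → L) = k * m := by
    have h1 : finrank K L * finrank L (Fin k → L) = finrank K (Fin k → L) :=
      finrank_mul_finrank K L (Fin k → L)
    rw [hm, Module.finrank_pi, Fintype.card_fin] at h1
    rw [← h1, Nat.mul_comm]
  have hmem_cw : ∀ x : Fin k → L, cwv e x ∈ C := by
    intro x
    rw [cwv_eq_sum]
    exact Submodule.sum_mem _ fun j _ => Submodule.smul_mem _ _ (he_mem j)
  have hC := coreC (K := K) C e he_mem hsur hdim top_iff_orth
  have main2 : (⨆ v ∈ C, rkSupport K v) = ⊤ →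
      ∀ c ∈ C, c ≠ 0 → finrank K (rkSupport K c) = m := by
    intro hsup c hc hc0
    obtain ⟨x, rfl⟩ := hsur c hc
    have hx : x ≠ 0 := by
      intro h0
      apply hc0
      rw [h0, cwv_eq_sum]
      simp
    rw [rk_eq, coreA e x hx (hC.mp hsup), hm]
  refine ⟨⟨fun hsup => ⟨m, main2 hsup⟩, ?_⟩, main2⟩
  rintro ⟨w, hwall⟩
  apply hC.mpr
  apply coreB hm hk2 e hli hdim
  intro x hx
  have h1 := hwall (cwv e x) (hmem_cw x) (by
    intro h0
    exact hx (cwv_zero_iff e hli x h0))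
  rw [rk_eq] at h1
  exact h1
end

section
/- An [n,k]_{q^m/q} system 𝒰 is a linear cutting blocking set (meaning: for any two F_{q^m}-hyperplanes H, H' of F_{q^m}^k, 𝒰 ∩ H ⊆ 𝒰 ∩ H' implies H = H') if and only if for every F_{q^m}-hyperplane H of F_{q^m}^k, ⟨H ∩ 𝒰⟩_{F_{q^m}} = H. -/
open Module Submodule

/-!
If `span (H ∩ U) = H` for every hyperplane `H`, then `U ∩ H ⊆ U ∩ H'` forces `H ≤ H'`, hence
`H = H'`. Conversely, if `W := span (H ∩ U)` is a proper subspace of `H`, a linear form vanishing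
on `W` but not at some `y ∈ H \ W` has a kernel `H'` with `U ∩ H ⊆ U ∩ H'` and `H' ≠ H`.
-/

section Hyperplanes

variable {L V : Type*} [Field L] [AddCommGroup V] [Module L V] [FiniteDimensional L V]

theorem Submodule.exists_hyperplane_ge_ne_of_lt {W H : Submodule L V} (hWH : W < H) :
    ∃ H' : Submodule L V, finrank L H' = finrank L V - 1 ∧ W ≤ H' ∧ H' ≠ H := by
  obtain ⟨y, hyH, hyW⟩ := SetLike.exists_of_lt hWH
  obtain ⟨f, hfy, hWf⟩ := exists_le_ker_of_notMem hyW
  have hf : f ≠ 0 := fun h => hfy (by simp [h])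
  refine ⟨LinearMap.ker f, ?_, hWf, fun h => hfy ?_⟩
  · have := Module.Dual.finrank_ker_add_one_of_ne_zero hf
    omega
  · rw [← LinearMap.mem_ker, h]
    exact hyH

theorem span_inter_eq_of_cutting {S : Set V}
    (hcut : ∀ H H' : Submodule L V, finrank L H = finrank L V - 1 →
      finrank L H' = finrank L V - 1 → S ∩ H ⊆ S ∩ H' → H = H')
    {H : Submodule L V} (hH : finrank L H = finrank L V - 1) :
    span L ((H : Set V) ∩ S) = H := by
  by_contra hne
  have hlt : span L ((H : Set V) ∩ S) < H :=
    lt_of_le_of_ne (span_le.mpr Set.inter_subset_left) hne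
  obtain ⟨H', hH', hle, hH'H⟩ := exists_hyperplane_ge_ne_of_lt hlt
  refine hH'H (hcut H H' hH hH' ?_).symm
  rintro z ⟨hzS, hzH⟩
  exact ⟨hzS, hle (subset_span ⟨hzH, hzS⟩)⟩

theorem eq_of_inter_subset_of_span_inter_eq {S : Set V} {H H' : Submodule L V}
    (hspan : span L ((H : Set V) ∩ S) = H) (hrank : finrank L H' ≤ finrank L H)
    (hsub : S ∩ H ⊆ S ∩ H') : H = H' := by
  have hle : H ≤ H' := by
    rw [← hspan, span_le]
    rintro z ⟨hzH, hzS⟩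
    exact (hsub ⟨hzS, hzH⟩).2
  exact eq_of_le_of_finrank_le hle hrank

theorem cutting_iff_forall_span_inter_eq (S : Set V) :
    (∀ H H' : Submodule L V, finrank L H = finrank L V - 1 →
      finrank L H' = finrank L V - 1 → S ∩ H ⊆ S ∩ H' → H = H') ↔
    ∀ H : Submodule L V, finrank L H = finrank L V - 1 → span L ((H : Set V) ∩ S) = H :=
  ⟨fun hcut _ hH => span_inter_eq_of_cutting hcut hH, fun hspan _ _ hH hH' hsub =>
    eq_of_inter_subset_of_span_inter_eq (hspan _ hH) (hH'.trans hH.symm).le hsub⟩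

end Hyperplanes

theorem stmt_13_general {K L : Type} [Field K] [Field L] [Algebra K L] {k : ℕ}
    (U : Submodule K (Fin k → L)) :
    (∀ H H' : Submodule L (Fin k → L),
       Module.finrank L H = k - 1 → Module.finrank L H' = k - 1 →
       (U : Set (Fin k → L)) ∩ (H : Set (Fin k → L)) ⊆
         (U : Set (Fin k → L)) ∩ (H' : Set (Fin k → L)) → H = H') ↔
    (∀ H : Submodule L (Fin k → L), Module.finrank L H = k - 1 →
       Submodule.span L ((H : Set (Fin k → L)) ∩ (U : Set (Fin k → L))) = H) := by
  simpa only [Module.finrank_fin_fun] using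
    cutting_iff_forall_span_inter_eq (L := L) (U : Set (Fin k → L))

theorem stmt_13 {K L : Type} [Field K] [Field L] [Algebra K L] {n k : ℕ} (hk : 1 ≤ k)
    (U : Submodule K (Fin k → L))
    (hU : Module.finrank K U = n)
    (hspan : Submodule.span L (U : Set (Fin k → L)) = ⊤) :
    (∀ H H' : Submodule L (Fin k → L),
       Module.finrank L H = k - 1 → Module.finrank L H' = k - 1 →
       (U : Set (Fin k → L)) ∩ (H : Set (Fin k → L)) ⊆
         (U : Set (Fin k → L)) ∩ (H' : Set (Fin k → L)) → H = H') ↔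
    (∀ H : Submodule L (Fin k → L), Module.finrank L H = k - 1 →
       Submodule.span L ((H : Set (Fin k → L)) ∩ (U : Set (Fin k → L))) = H) :=
  stmt_13_general U
end

section
/- Let C be a rank-nondegenerate [n,k]_{q^m/q} code with generator matrix G, let 𝒰 be the F_q-span of the columns of G, and let u, v ∈ F_{q^m}^k be nonzero. Then σ^rk(uG) ⊆ σ^rk(vG) if and only if ⟨u⟩^⊥ ∩ 𝒰 ⊇ ⟨v⟩^⊥ ∩ 𝒰. -/
/-!
The rank support of `w ∈ L^n` is, up to the standard identification of `(K^n)^*` with `K^n`,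
the range of the dual of `r ↦ ∑ r_j w_j`, i.e. the annihilator of its kernel. Hence
`σ(w) ⊆ σ(w')` iff every `K`-linear relation among the entries of `w'` is also one among
the entries of `w`. For `w = aG` the relation `r` holds iff `∑ r_j G_j ∈ ⟨a⟩^⊥`, where the `G_j`
are the columns of `G`, and these sums `∑ r_j G_j` run exactly through `𝒰`.
-/

open Module Submodule

theorem Submodule.comap_le_comap_iff_inf_range {R M N : Type*} [Semiring R] [AddCommMonoid M]
    [AddCommMonoid N] [Module R M] [Module R N] (f : M →ₗ[R] N) (p q : Submodule R N) :
    p.comap f ≤ q.comap f ↔ p ⊓ LinearMap.range f ≤ q ⊓ LinearMap.range f := by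
  constructor
  · rintro h y ⟨hp, x, rfl⟩
    exact ⟨h hp, x, rfl⟩
  · intro h x hx
    exact (h ⟨hx, x, rfl⟩).1

section

variable (K : Type) {L : Type} [Field K] [Field L] [Algebra K L] {n : ℕ}

lemma rkSupport_eq_map_range_dualMap (w : Fin n → L) :
    rkSupport K w = (LinearMap.range (Fintype.linearCombination K w).dualMap).map
      (Pi.basisFun K (Fin n)).dualBasis.equivFun.toLinearMap := by
  rw [rkSupport, ← LinearMap.range_comp]
  congr 1
  ext φ j
  simp

lemma rkSupport_le_rkSupport_iff (w w' : Fin n → L) :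
    rkSupport K w ≤ rkSupport K w' ↔
      LinearMap.ker (Fintype.linearCombination K w') ≤
        LinearMap.ker (Fintype.linearCombination K w) := by
  rw [rkSupport_eq_map_range_dualMap, rkSupport_eq_map_range_dualMap,
    Submodule.map_le_map_iff_of_injective (LinearEquiv.injective _),
    LinearMap.range_dualMap_eq_dualAnnihilator_ker, LinearMap.range_dualMap_eq_dualAnnihilator_ker,
    Subspace.dualAnnihilator_le_dualAnnihilator_iff]

lemma dotLin_comp_linearCombination_transpose {k : ℕ} (G : Matrix (Fin k) (Fin n) L)
    (a : Fin k → L) :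
    (dotLin a).restrictScalars K ∘ₗ Fintype.linearCombination K (fun j => G.transpose j) =
      Fintype.linearCombination K (Matrix.vecMul a G) := by
  ext j
  simp [dotLin, Matrix.vecMul, dotProduct, mul_comm]

end

theorem stmt_14_general {K L : Type} [Field K] [Field L] [Algebra K L] {n k : ℕ}
    (G : Matrix (Fin k) (Fin n) L)
    (U : Submodule K (Fin k → L))
    (hU : U = Submodule.span K (Set.range G.transpose))
    (u v : Fin k → L) :
    rkSupport K (Matrix.vecMul u G) ≤ rkSupport K (Matrix.vecMul v G) ↔
      (LinearMap.ker (dotLin v)).restrictScalars K ⊓ U ≤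
        (LinearMap.ker (dotLin u)).restrictScalars K ⊓ U := by
  have hrange : LinearMap.range (Fintype.linearCombination K (fun j => G.transpose j)) = U := by
    rw [Fintype.range_linearCombination, hU]
  rw [rkSupport_le_rkSupport_iff, ← dotLin_comp_linearCombination_transpose,
    ← dotLin_comp_linearCombination_transpose, LinearMap.ker_comp, LinearMap.ker_comp,
    comap_le_comap_iff_inf_range, hrange, LinearMap.ker_restrictScalars,
    LinearMap.ker_restrictScalars]

theorem stmt_14 {K L : Type} [Field K] [Field L] [Algebra K L] {n k : ℕ}
    (C : Submodule L (Fin n → L)) (G : Matrix (Fin k) (Fin n) L)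
    (hG : C = Submodule.span L (Set.range G))
    (hk : Module.finrank L C = k)
    (U : Submodule K (Fin k → L))
    (hU : U = Submodule.span K (Set.range G.transpose))
    (hnd : Module.finrank K U = n)
    (u v : Fin k → L) (hu : u ≠ 0) (hv : v ≠ 0) :
    rkSupport K (Matrix.vecMul u G) ≤ rkSupport K (Matrix.vecMul v G) ↔
      (LinearMap.ker (dotLin v)).restrictScalars K ⊓ U ≤
        (LinearMap.ker (dotLin u)).restrictScalars K ⊓ U :=
  stmt_14_general G U hU u v
end

section
/- Let C be a minimal [n,k]_{q^m/q} rank-metric code. Then every codeword c ∈ C satisfies rk(c) ≤ dim_{F_q}(σ^rk(C)) - k + 1; in particular the maximum rank of a codeword is at most n - k + 1. -/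
/-!
Fix `c ∈ C` and a `K`-linear map `f` on `K^n` with kernel `σ(c)`. Acting coordinatewise on `L^n`
through its matrix, `f` transports rank supports: `σ(f v) = f(σ(v))`. Hence `f` kills exactly the
codewords whose support lies in `σ(c)`, which by minimality are the multiples of `c`, so `f(C)` has
`L`-dimension at least `k - 1`. On the other hand an `L`-code has `L`-dimension at most the
`K`-dimension of its rank support, and the support of `f(C)` lies in `f(σ(C))`, whose dimension is
`dim σ(C) - rk(c)` because `σ(c) ≤ σ(C)`.
-/

open Module Submodule

section LinearAlgebra

variable {K V W : Type*} [Field K] [AddCommGroup V] [Module K V] [AddCommGroup W] [Module K W]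

theorem exists_linearMap_pi_ker_eq [FiniteDimensional K V] (S : Submodule K V) :
    ∃ (m : ℕ) (f : V →ₗ[K] Fin m → K), LinearMap.ker f = S :=
  ⟨_, (finBasis K (V ⧸ S)).equivFun.toLinearMap ∘ₗ S.mkQ, by
    rw [LinearEquiv.ker_comp, ker_mkQ]⟩

theorem finrank_map_add_finrank_inf_ker [FiniteDimensional K V] (f : V →ₗ[K] W)
    (C : Submodule K V) :
    finrank K (C.map f) + finrank K ↥(C ⊓ LinearMap.ker f) = finrank K C := by
  rw [← (f.domRestrict C).finrank_range_add_finrank_ker, LinearMap.range_domRestrict,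
    LinearMap.ker_domRestrict, ← finrank_map_subtype_eq, map_comap_subtype]

theorem finrank_span_image_le {L : Type*} [Field L] [Algebra K L] [Module L W]
    [IsScalarTower K L W] [FiniteDimensional K V] (g : V →ₗ[K] W) (U : Submodule K V) :
    finrank L (span L (g '' U)) ≤ finrank K U := by
  let b := finBasis K U
  have hU : U = span K (Set.range (U.subtype ∘ b)) := by
    rw [Set.range_comp, span_image, b.span_eq, Submodule.map_top, range_subtype]
  have hspan : span L (g '' U) = span L (Set.range (g ∘ U.subtype ∘ b)) := by
    refine le_antisymm (span_le.2 ?_) (span_mono ?_)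
    · rintro _ ⟨x, hx, rfl⟩
      rw [hU] at hx
      refine span_le_restrictScalars K L _ ?_
      rw [Set.range_comp, ← map_span]
      exact mem_map_of_mem hx
    · rintro _ ⟨i, rfl⟩
      exact ⟨b i, (b i).2, rfl⟩
  rw [hspan]
  exact (finrank_range_le_card _).trans_eq (Fintype.card_fin _)

end LinearAlgebra

section RankSupport

variable {K L : Type} [Field K] [Field L] [Algebra K L] {n m : ℕ}

theorem rkSupport_eq_bot_iff {v : Fin n → L} : rkSupport K v = ⊥ ↔ v = 0 := by
  rw [rkSupport, LinearMap.range_eq_bot]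
  constructor
  · intro h
    funext i
    exact (forall_dual_apply_eq_zero_iff K (v i)).1 fun φ => congrFun (LinearMap.congr_fun h φ) i
  · rintro rfl
    ext φ i
    simp

variable (L) in
noncomputable def piExtendScalars (f : (Fin n → K) →ₗ[K] Fin m → K) :
    (Fin n → L) →ₗ[L] Fin m → L :=
  Matrix.toLin' ((LinearMap.toMatrix' f).map (algebraMap K L))

theorem dual_comp_piExtendScalars (f : (Fin n → K) →ₗ[K] Fin m → K) (v : Fin n → L)
    (φ : Dual K L) : (fun i => φ (piExtendScalars L f v i)) = f (fun i => φ (v i)) := by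
  conv_rhs => rw [← Matrix.toLin'_toMatrix' f]
  funext i
  simp only [piExtendScalars, Matrix.toLin'_apply, Matrix.mulVec, dotProduct, Matrix.map_apply,
    map_sum, ← Algebra.smul_def, map_smul, smul_eq_mul]

theorem rkSupport_piExtendScalars (f : (Fin n → K) →ₗ[K] Fin m → K) (v : Fin n → L) :
    rkSupport K (piExtendScalars L f v) = (rkSupport K v).map f := by
  rw [rkSupport, rkSupport, ← LinearMap.range_comp]
  congr 1
  ext φ : 1
  exact dual_comp_piExtendScalars f v φ

theorem piExtendScalars_apply_eq_zero_iff (f : (Fin n → K) →ₗ[K] Fin m → K)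
    (v : Fin n → L) :
    piExtendScalars L f v = 0 ↔ rkSupport K v ≤ LinearMap.ker f := by
  rw [← rkSupport_eq_bot_iff (K := K), rkSupport_piExtendScalars, ← le_bot_iff,
    map_le_iff_le_comap, comap_bot]

theorem mem_span_rkSupport (v : Fin n → L) :
    v ∈ span L ((Algebra.linearMap K L).compLeft (Fin n) '' rkSupport K v) := by
  classical
  let b := Basis.ofVectorSpace K L
  let s : Finset _ := Finset.univ.biUnion fun i => (b.repr (v i)).support
  have hv : v = ∑ x ∈ s,
      b x • (Algebra.linearMap K L).compLeft (Fin n) (fun i => b.coord x (v i)) := by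
    funext i
    conv_lhs => rw [← b.linearCombination_repr (v i)]
    rw [Finsupp.linearCombination_apply, Finsupp.sum_of_support_subset _
      (Finset.subset_biUnion_of_mem (fun i => (b.repr (v i)).support) (Finset.mem_univ i))
      (fun x c => c • b x) fun _ _ => zero_smul K _,
      Finset.sum_apply]
    refine Finset.sum_congr rfl fun x _ => ?_
    simp [Algebra.smul_def, mul_comm]
  have hmem (x) : (fun i => b.coord x (v i)) ∈ rkSupport K v := ⟨b.coord x, rfl⟩
  have := sum_mem (t := s) fun x _ => smul_mem _ (b x) (subset_span (Set.mem_image_of_mem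
    ((Algebra.linearMap K L).compLeft (Fin n)) (hmem x)) :
      _ ∈ span L ((Algebra.linearMap K L).compLeft (Fin n) '' rkSupport K v))
  rwa [← hv] at this

theorem finrank_le_finrank_iSup_rkSupport (D : Submodule L (Fin n → L)) :
    finrank L D ≤ finrank K ↥(⨆ w ∈ D, rkSupport K w) := by
  refine (finrank_mono fun w hw => ?_).trans
    (finrank_span_image_le ((Algebra.linearMap K L).compLeft (Fin n)) _)
  exact span_mono (Set.image_mono (le_iSup₂ (f := fun w _ => rkSupport K w) w hw))
    (mem_span_rkSupport w)

theorem iSup_rkSupport_map_piExtendScalars_le (f : (Fin n → K) →ₗ[K] Fin m → K)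
    (C : Submodule L (Fin n → L)) :
    ⨆ w ∈ C.map (piExtendScalars L f), rkSupport K w ≤
      (⨆ v ∈ C, rkSupport K v).map f := by
  refine iSup₂_le ?_
  rintro _ ⟨v, hv, rfl⟩
  rw [rkSupport_piExtendScalars]
  exact map_mono (le_iSup₂ (f := fun v _ => rkSupport K v) v hv)

end RankSupport

section MinimalCode

variable {K L : Type} [Field K] [Field L] [Algebra K L] {n : ℕ}

variable (K) in
def IsMinimalCode (C : Submodule L (Fin n → L)) : Prop :=
  ∀ v ∈ C, ∀ v' ∈ C, rkSupport K v' ≤ rkSupport K v → ∃ α : L, v' = α • v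

theorem IsMinimalCode.finrank_rkSupport_add_finrank_le {C : Submodule L (Fin n → L)}
    (hC : IsMinimalCode K C) {c : Fin n → L} (hc : c ∈ C) :
    finrank K (rkSupport K c) + finrank L C ≤ finrank K ↥(⨆ v ∈ C, rkSupport K v) + 1 := by
  set suppC := ⨆ v ∈ C, rkSupport K v
  obtain ⟨m, f, hf⟩ := exists_linearMap_pi_ker_eq (rkSupport K c)
  have hkernel : C ⊓ LinearMap.ker (piExtendScalars L f) ≤ L ∙ c := by
    rintro x ⟨hxC, hx⟩
    rw [SetLike.mem_coe, LinearMap.mem_ker, piExtendScalars_apply_eq_zero_iff, hf] at hx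
    obtain ⟨α, rfl⟩ := hC c hc x hxC hx
    exact smul_mem _ _ (mem_span_singleton_self c)
  have hkernel_finrank : finrank L ↥(C ⊓ LinearMap.ker (piExtendScalars L f)) ≤ 1 :=
    (finrank_mono hkernel).trans ((finrank_span_le_card {c}).trans (by simp))
  have hcode := finrank_map_add_finrank_inf_ker (piExtendScalars L f) C
  have hsupport := finrank_map_add_finrank_inf_ker f suppC
  rw [hf, inf_eq_right.2 (le_iSup₂ (f := fun v _ => rkSupport K v) c hc)] at hsupport
  have himage : finrank L ↥(C.map (piExtendScalars L f)) ≤ finrank K ↥(suppC.map f) :=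
    (finrank_le_finrank_iSup_rkSupport _).trans
      (finrank_mono (iSup_rkSupport_map_piExtendScalars_le f C))
  omega

end MinimalCode

theorem stmt_15 {K L : Type} [Field K] [Field L] [Algebra K L] {n k : ℕ}
    (C : Submodule L (Fin n → L)) (hk : Module.finrank L C = k)
    (hmin : ∀ v ∈ C, ∀ v' ∈ C, rkSupport K v' ≤ rkSupport K v → ∃ α : L, v' = α • v) :
    ∀ c ∈ C,
      Module.finrank K (rkSupport K c) + k ≤
        Module.finrank K ↥(⨆ v ∈ C, rkSupport K v) + 1 ∧
      Module.finrank K (rkSupport K c) + k ≤ n + 1 := by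
  intro c hc
  have hbound : finrank K (rkSupport K c) + k ≤ finrank K ↥(⨆ v ∈ C, rkSupport K v) + 1 :=
    hk ▸ IsMinimalCode.finrank_rkSupport_add_finrank_le hmin hc
  have hambient : finrank K ↥(⨆ v ∈ C, rkSupport K v) ≤ n :=
    (finrank_le _).trans_eq (finrank_fin_fun K)
  exact ⟨hbound, by omega⟩
end

section
/- Let C be an [n,k]_{q^m/q} code that is Hamming-minimal (every nonzero codeword c' whose Hamming support is contained in the Hamming support of a codeword c is an F_{q^m}-multiple of c). Then C is rank-minimal (the same property holds with rank supports in place of Hamming supports). -/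
open Module Submodule

section RankSupport

variable {K L : Type} [Field K] [Field L] [Algebra K L] {n : ℕ}

theorem apply_eq_zero_iff_forall_mem_rkSupport (v : Fin n → L) (i : Fin n) :
    v i = 0 ↔ ∀ u ∈ rkSupport K v, u i = 0 := by
  constructor
  · rintro hv _ ⟨φ, rfl⟩
    simp [hv]
  · intro h
    exact (Module.forall_dual_apply_eq_zero_iff K (v i)).mp fun φ => h _ ⟨φ, rfl⟩

theorem hammingSupport_subset_of_rkSupport_le {v w : Fin n → L}
    (h : rkSupport K v ≤ rkSupport K w) : {i | v i ≠ 0} ⊆ {i | w i ≠ 0} := by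
  intro i hv hw
  refine hv ((apply_eq_zero_iff_forall_mem_rkSupport (K := K) v i).mpr fun u hu => ?_)
  exact (apply_eq_zero_iff_forall_mem_rkSupport w i).mp hw u (h hu)

end RankSupport

theorem stmt_17 {K L : Type} [Field K] [Field L] [Algebra K L] {n : ℕ}
    (C : Submodule L (Fin n → L))
    (hHmin : ∀ c ∈ C, ∀ c' ∈ C, c' ≠ 0 → {i | c' i ≠ 0} ⊆ {i | c i ≠ 0} →
      ∃ α : L, c' = α • c) :
    ∀ c ∈ C, ∀ c' ∈ C, c' ≠ 0 → rkSupport K c' ≤ rkSupport K c →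
      ∃ α : L, c' = α • c :=
  fun c hc c' hc' hne hrk =>
    hHmin c hc c' hc' hne (hammingSupport_subset_of_rkSupport_le hrk)
end

section
/- Let C be a rank-nondegenerate [n,k]_{q^m/q} code with n ≥ (k-1)m + 1. Then C is minimal. -/
/-! If `rkSupport K v' ≤ rkSupport K v` with `v'` not a multiple of `v`, cut `C` by a hyperplane
`T` through `v` that misses `v'`. Then `C = L ∙ v' ⊔ T`, and the rank support of `v'` is
already covered by that of `v ∈ T`, so the rank supports of all codewords lie in the span `S` of
those of the codewords of `T`. Since `S` is spanned by the rank supports of a basis of `T`, each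
of `K`-dimension at most `m`, it has dimension at most `(k - 1) m < n`, contradicting
nondegeneracy (`S = ⊤`). -/

open Module Submodule

section

variable {K V : Type*} [Field K] [AddCommGroup V] [Module K V] [FiniteDimensional K V]

lemma finrank_finset_sup_le_sum {ι : Type*} (s : Finset ι) (M : ι → Submodule K V) :
    finrank K (s.sup M : Submodule K V) ≤ ∑ i ∈ s, finrank K (M i) := by
  classical
  induction s using Finset.induction with
  | empty => simp
  | insert a s ha ih =>
    rw [Finset.sup_insert, Finset.sum_insert ha]
    exact (finrank_add_le_finrank_add_finrank _ _).trans (add_le_add le_rfl ih)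

end

section rkSupport

variable {K L : Type} [Field K] [Field L] [Algebra K L] {n : ℕ}

lemma rkSupport_zero : rkSupport K (0 : Fin n → L) = ⊥ := by
  refine eq_bot_iff.mpr ?_
  rintro _ ⟨φ, rfl⟩
  ext i
  simp

lemma rkSupport_add_le (v w : Fin n → L) :
    rkSupport K (v + w) ≤ rkSupport K v ⊔ rkSupport K w := by
  rintro _ ⟨φ, rfl⟩
  have hφ : (fun i ↦ φ ((v + w) i)) = (fun i ↦ φ (v i)) + fun i ↦ φ (w i) := by
    ext i; simp
  change (fun i ↦ φ ((v + w) i)) ∈ _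
  exact hφ ▸ add_mem_sup ⟨φ, rfl⟩ ⟨φ, rfl⟩

lemma rkSupport_smul_le (a : L) (v : Fin n → L) :
    rkSupport K (a • v) ≤ rkSupport K v := by
  rintro _ ⟨φ, rfl⟩
  exact ⟨φ ∘ₗ LinearMap.mulLeft K a, rfl⟩

lemma rkSupport_le_iSup_of_mem_span {s : Set (Fin n → L)} {u : Fin n → L}
    (hu : u ∈ span L s) : rkSupport K u ≤ ⨆ w ∈ s, rkSupport K w := by
  induction hu using span_induction with
  | mem w hw => exact le_iSup₂ (f := fun w _ ↦ rkSupport K w) w hw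
  | zero => simp [rkSupport_zero]
  | add x y _ _ hx hy => exact (rkSupport_add_le x y).trans (sup_le hx hy)
  | smul a x _ hx => exact (rkSupport_smul_le a x).trans hx

lemma iSup_rkSupport_span_singleton_sup_le (w : Fin n → L) (T : Submodule L (Fin n → L)) :
    ⨆ x ∈ (L ∙ w) ⊔ T, rkSupport K x ≤ rkSupport K w ⊔ ⨆ x ∈ T, rkSupport K x := by
  refine iSup₂_le fun x hx ↦ ?_
  rw [← span_eq T, ← span_union] at hx
  have := rkSupport_le_iSup_of_mem_span (K := K) hx
  rwa [iSup_union, iSup_singleton] at this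

lemma exists_lt_iSup_rkSupport_le {C : Submodule L (Fin n → L)} {v v' : Fin n → L}
    (hv : v ∈ C) (hv' : v' ∈ C) (hv'v : v' ∉ L ∙ v)
    (hle : rkSupport K v' ≤ rkSupport K v) :
    ∃ T < C, ⨆ x ∈ C, rkSupport K x ≤ ⨆ x ∈ T, rkSupport K x := by
  -- `T := ker f ⊓ C` is a hyperplane section of `C` through `v` that misses `v'`.
  obtain ⟨f, hfv', hfv⟩ := exists_dual_map_eq_bot_of_notMem hv'v inferInstance
  have hfv0 : f v ∈ (L ∙ v).map f := mem_map_of_mem (mem_span_singleton_self v)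
  rw [hfv, mem_bot] at hfv0
  have hC : C = (L ∙ v') ⊔ LinearMap.ker f ⊓ C := by
    rw [← sup_inf_assoc_of_le _ ((span_singleton_le_iff_mem _ _).mpr hv'),
      f.span_singleton_sup_ker_eq_top hfv', top_inf_eq]
  refine ⟨LinearMap.ker f ⊓ C, inf_le_right.lt_of_ne fun h ↦ hfv' ?_, ?_⟩
  · exact (h.ge hv').1
  · have hv_T : v ∈ LinearMap.ker f ⊓ C := ⟨LinearMap.mem_ker.mpr hfv0, hv⟩
    conv_lhs => rw [hC]
    refine (iSup_rkSupport_span_singleton_sup_le v' _).trans (sup_le ?_ le_rfl)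
    exact hle.trans (le_iSup₂ (f := fun x _ ↦ rkSupport K x) v hv_T)

variable [FiniteDimensional K L]

lemma finrank_rkSupport_le (v : Fin n → L) : finrank K (rkSupport K v) ≤ finrank K L :=
  (LinearMap.finrank_range_le _).trans_eq Subspace.dual_finrank_eq

lemma finrank_iSup_rkSupport_le (T : Submodule L (Fin n → L)) :
    finrank K (⨆ x ∈ T, rkSupport K x : Submodule K (Fin n → K)) ≤
      finrank L T * finrank K L := by
  let b := finBasis L T
  have hspan :
      ⨆ x ∈ T, rkSupport K x ≤ Finset.univ.sup fun i ↦ rkSupport K (b i : Fin n → L) := by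
    refine iSup₂_le fun x hx ↦ ?_
    have hx' := mem_map_of_mem (f := T.subtype) (b.mem_span ⟨x, hx⟩)
    rw [map_span, ← Set.range_comp] at hx'
    have := rkSupport_le_iSup_of_mem_span (K := K) hx'
    rwa [iSup_range, ← Finset.sup_univ_eq_iSup] at this
  calc finrank K (⨆ x ∈ T, rkSupport K x : Submodule K (Fin n → K))
      ≤ ∑ i, finrank K (rkSupport K (b i : Fin n → L)) :=
        (finrank_mono hspan).trans (finrank_finset_sup_le_sum _ _)
    _ ≤ ∑ _i : Fin (finrank L T), finrank K L :=
        Finset.sum_le_sum fun i _ ↦ finrank_rkSupport_le _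
    _ = finrank L T * finrank K L := by simp

end rkSupport

theorem stmt_18_general {K L : Type} [Field K] [Field L] [Algebra K L] [Fintype L]
    {n k m : ℕ} (hm : Module.finrank K L = m)
    (C : Submodule L (Fin n → L)) (hk : Module.finrank L C = k)
    (hnd : (⨆ v ∈ C, rkSupport K v) = ⊤)
    (hn : (k - 1) * m + 1 ≤ n) :
    ∀ v ∈ C, ∀ v' ∈ C, rkSupport K v' ≤ rkSupport K v → ∃ α : L, v' = α • v := by
  intro v hv v' hv' hle
  by_contra hprop
  have hv'v : v' ∉ L ∙ v := fun h ↦ hprop (by simpa [eq_comm] using mem_span_singleton.mp h)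
  obtain ⟨T, hTC, hcover⟩ := exists_lt_iSup_rkSupport_le hv hv' hv'v hle
  have hT : finrank L T + 1 ≤ k := hk ▸ finrank_lt_finrank_of_lt hTC
  have hnT : n ≤ finrank L T * m := calc
    n = finrank K (⨆ x ∈ C, rkSupport K x : Submodule K (Fin n → K)) := by
        rw [hnd, finrank_top, finrank_fin_fun]
    _ ≤ finrank K (⨆ x ∈ T, rkSupport K x : Submodule K (Fin n → K)) := finrank_mono hcover
    _ ≤ finrank L T * m := hm ▸ finrank_iSup_rkSupport_le T
  have hTk : finrank L T * m ≤ (k - 1) * m := Nat.mul_le_mul_right m (by omega)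
  omega

theorem stmt_18 {K L : Type} [Field K] [Field L] [Algebra K L] [Fintype K] [Fintype L]
    {n k m : ℕ} (hm : Module.finrank K L = m)
    (C : Submodule L (Fin n → L)) (hk : Module.finrank L C = k)
    (hnd : (⨆ v ∈ C, rkSupport K v) = ⊤)
    (hn : (k - 1) * m + 1 ≤ n) :
    ∀ v ∈ C, ∀ v' ∈ C, rkSupport K v' ≤ rkSupport K v → ∃ α : L, v' = α • v :=
  stmt_18_general hm C hk hnd hn
end

section
/- Let 𝒰 be a linear cutting [n,k]_{q^m/q} blocking set and let T ⊆ 𝒰 be an ℓ-dimensional F_{q^m}-subspace of F_{q^m}^k. Then the quotient 𝒰/T ⊆ F_{q^m}^k / T is a linear cutting [n - ℓm, k - ℓ]_{q^m/q} blocking set. -/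
open Module Submodule

/-!
The quotient map `π : 𝔽_{q^m}^k → 𝔽_{q^m}^k / T` is surjective with kernel `T ⊆ 𝒰`, so rank–nullity
gives `dim 𝒰/T = n - ℓm`, and spanning sets are mapped to spanning sets. A hyperplane `H'` of the
quotient is the image of its preimage `π⁻¹ H'`, a hyperplane of `𝔽_{q^m}^k` containing `T`; since
`π⁻¹ H' ∩ 𝒰` spans `π⁻¹ H'`, its image, which lies in `H' ∩ 𝒰/T`, spans `H'`.
-/

section
variable {K V W : Type*} [DivisionRing K] [AddCommGroup V] [Module K V] [AddCommGroup W]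
  [Module K W]

theorem Submodule.finrank_map_add_finrank_ker_of_ker_le (f : V →ₗ[K] W) {U : Submodule K V}
    [FiniteDimensional K U] (h : LinearMap.ker f ≤ U) :
    finrank K (U.map f) + finrank K (LinearMap.ker f) = finrank K U := by
  have := LinearMap.finrank_range_add_finrank_ker (f.comp U.subtype)
  rwa [LinearMap.range_comp, range_subtype, LinearMap.ker_comp,
    (comapSubtypeEquivOfLe h).finrank_eq] at this

theorem Submodule.finrank_comap_of_surjective [FiniteDimensional K V] {f : V →ₗ[K] W}
    (hf : Function.Surjective f) (H : Submodule K W) :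
    finrank K (H.comap f) = finrank K H + finrank K (LinearMap.ker f) := by
  rw [← finrank_map_add_finrank_ker_of_ker_le f (LinearMap.ker_le_comap f),
    map_comap_eq_of_surjective hf]

end

theorem Submodule.span_inter_image_eq_of_span_preimage_inter {R M N : Type*} [Semiring R]
    [AddCommMonoid M] [Module R M] [AddCommMonoid N] [Module R N] {f : M →ₗ[R] N}
    (hf : Function.Surjective f) {H : Submodule R N} {S : Set M}
    (h : span R ((H.comap f : Set M) ∩ S) = H.comap f) :
    span R ((H : Set N) ∩ f '' S) = H := by
  refine le_antisymm (span_le.2 Set.inter_subset_left) ?_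
  calc H = (H.comap f).map f := (map_comap_eq_of_surjective hf H).symm
    _ = span R (f '' ((H.comap f : Set M) ∩ S)) := by rw [span_image, h]
    _ ≤ span R ((H : Set N) ∩ f '' S) :=
      span_mono (Set.image_subset_iff.2 fun x hx => ⟨hx.1, x, hx.2, rfl⟩)

theorem stmt_19_general {K L : Type} [Field K] [Field L] [Algebra K L] [Fintype L]
    {n k l m : ℕ} (hm : Module.finrank K L = m)
    (U : Submodule K (Fin k → L))
    (hU : Module.finrank K U = n)
    (hspan : Submodule.span L (U : Set (Fin k → L)) = ⊤)
    (hcut : ∀ H : Submodule L (Fin k → L), Module.finrank L H = k - 1 →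
      Submodule.span L ((H : Set (Fin k → L)) ∩ (U : Set (Fin k → L))) = H)
    (T : Submodule L (Fin k → L)) (hT : Module.finrank L T = l)
    (hTU : (T : Set (Fin k → L)) ⊆ (U : Set (Fin k → L)))
    (U' : Submodule K ((Fin k → L) ⧸ T))
    (hU' : U' = Submodule.map (T.mkQ.restrictScalars K) U) :
    Module.finrank K U' = n - l * m ∧
    Submodule.span L (U' : Set ((Fin k → L) ⧸ T)) = ⊤ ∧
    (∀ H : Submodule L ((Fin k → L) ⧸ T), Module.finrank L H = (k - l) - 1 →
      Submodule.span L ((H : Set ((Fin k → L) ⧸ T)) ∩ (U' : Set ((Fin k → L) ⧸ T))) = H) := by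
  subst hU'
  have hsurj : Function.Surjective T.mkQ := T.mkQ_surjective
  refine ⟨?_, ?_, fun H hH => ?_⟩
  · have hker : LinearMap.ker (T.mkQ.restrictScalars K) = T.restrictScalars K := by
      rw [LinearMap.ker_restrictScalars, ker_mkQ]
    have hTK : finrank K (T.restrictScalars K) = l * m := by
      change finrank K T = _
      rw [← finrank_mul_finrank K L T, hm, hT, mul_comm]
    have := finrank_map_add_finrank_ker_of_ker_le (T.mkQ.restrictScalars K)
      (hker.trans_le hTU)
    rw [hker, hTK, hU] at this
    omega
  · change span L (T.mkQ '' U) = ⊤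
    rw [span_image, hspan, Submodule.map_top, range_mkQ]
  · rcases eq_or_ne H ⊥ with rfl | hH0
    · exact le_bot_iff.1 (span_le.2 Set.inter_subset_left)
    have hpos : finrank L H ≠ 0 := Submodule.finrank_eq_zero.not.2 hH0
    refine span_inter_image_eq_of_span_preimage_inter hsurj (hcut _ ?_)
    rw [finrank_comap_of_surjective hsurj, ker_mkQ, hH, hT]
    omega

theorem stmt_19 {K L : Type} [Field K] [Field L] [Algebra K L] [Fintype K] [Fintype L]
    {n k l m : ℕ} (hm : Module.finrank K L = m)
    (U : Submodule K (Fin k → L))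
    (hU : Module.finrank K U = n)
    (hspan : Submodule.span L (U : Set (Fin k → L)) = ⊤)
    (hcut : ∀ H : Submodule L (Fin k → L), Module.finrank L H = k - 1 →
      Submodule.span L ((H : Set (Fin k → L)) ∩ (U : Set (Fin k → L))) = H)
    (T : Submodule L (Fin k → L)) (hT : Module.finrank L T = l)
    (hTU : (T : Set (Fin k → L)) ⊆ (U : Set (Fin k → L)))
    (U' : Submodule K ((Fin k → L) ⧸ T))
    (hU' : U' = Submodule.map (T.mkQ.restrictScalars K) U) :
    Module.finrank K U' = n - l * m ∧
    Submodule.span L (U' : Set ((Fin k → L) ⧸ T)) = ⊤ ∧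
    (∀ H : Submodule L ((Fin k → L) ⧸ T), Module.finrank L H = (k - l) - 1 →
      Submodule.span L ((H : Set ((Fin k → L) ⧸ T)) ∩ (U' : Set ((Fin k → L) ⧸ T))) = H) :=
  stmt_19_general hm U hU hspan hcut T hT hTU U' hU'
end
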